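/- Let f ∈ 𝒮^*(𝒬). Then for every p, q ∈ ℕ there exists a constant c_{p,q} such that |f(x,t)| ≤ c_{p,q} |t|^{2p} (1+|x|²)^{−q} for all x ∈ ℍ and t ∈ Im ℍ. -/

import Mathlib

noncomputable section

open MeasureTheory Quaternion Complex RealInnerProductSpace

/- Measure-theoretic instances for the quaternions. -/
noncomputable instance : MeasurableSpace ℍ[ℝ] := borel _
instance : BorelSpace ℍ[ℝ] := ⟨rfl⟩

/-- The purely imaginary quaternions `Im ℍ ≅ ℝ³`. -/
def ImH : Submodule ℝ ℍ[ℝ] where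
  carrier := {q | q.re = 0}
  add_mem' := by intro a b ha hb; simp_all [Set.mem_setOf_eq]
  zero_mem' := by simp
  smul_mem' := by intro c q hq; simp_all [Set.mem_setOf_eq]

noncomputable instance : MeasurableSpace ↥ImH := borel _
instance : BorelSpace ↥ImH := ⟨rfl⟩

/-- the imaginary part of a quaternion, as an element of `Im ℍ`. -/
def imPart (q : ℍ[ℝ]) : ↥ImH := ⟨q.im, by change q.im.re = 0; simp⟩

/-- The quaternion Heisenberg group `𝒬 = ℍ × Im ℍ` (as a set/measure space). -/
abbrev QH := ℍ[ℝ] × ↥ImH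

/-- Group law of `𝒬` : `(x,t)(x′,t′) = (x + x′, t + t′ − 2 Im( x̄′ x ))`. -/
def Qmul (p q : QH) : QH :=
  (p.1 + q.1, p.2 + q.2 - (2 : ℝ) • imPart (star q.1 * p.1))

/-- Inverse in `𝒬`. -/
def Qinv (p : QH) : QH := (-p.1, -p.2)

lemma sandwich_re (v t : ℍ[ℝ]) (ht : t.re = 0) : (v * t * star v).re = 0 := by
  simp [Quaternion.re_mul, Quaternion.imI_mul, Quaternion.imJ_mul, Quaternion.imK_mul,
    Quaternion.re_star, Quaternion.imI_star, Quaternion.imJ_star, Quaternion.imK_star, ht]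
  ring

/-- `t ↦ v t v̄` as a map of `Im ℍ`. -/
def sandwich (v : ℍ[ℝ]) (t : ↥ImH) : ↥ImH := ⟨v * (t : ℍ[ℝ]) * star v, sandwich_re v t t.2⟩

/-- `Sp(1)`, the unit quaternions. -/
abbrev Sp1 : Type := Metric.sphere (0 : ℍ[ℝ]) 1

lemma Sp1.norm_eq (u : Sp1) : ‖(u : ℍ[ℝ])‖ = 1 := mem_sphere_zero_iff_norm.mp u.2

def sp1Mul (u v : Sp1) : Sp1 :=
  ⟨(u : ℍ[ℝ]) * (v : ℍ[ℝ]), by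
    simp [mem_sphere_zero_iff_norm, norm_mul, Sp1.norm_eq u, Sp1.norm_eq v]⟩

def sp1One : Sp1 := ⟨1, by simp [mem_sphere_zero_iff_norm]⟩

/-- The (two-fold cover of the) affine automorphism group `𝐏` of `𝒬`. -/
abbrev P := ℍ[ℝ] × ↥ImH × {r : ℝ // 0 < r} × Sp1 × Sp1

/-- Group law of `𝐏`. -/
def Pmul (g h : P) : P :=
  ⟨g.1 + Real.sqrt (g.2.2.1 : ℝ) • ((g.2.2.2.1 : ℍ[ℝ]) * h.1 * star (g.2.2.2.2 : ℍ[ℝ])),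
   g.2.1 + (g.2.2.1 : ℝ) • sandwich (g.2.2.2.2 : ℍ[ℝ]) h.2.1
     - (2 * Real.sqrt (g.2.2.1 : ℝ)) •
        imPart ((g.2.2.2.2 : ℍ[ℝ]) * star h.1 * star (g.2.2.2.1 : ℍ[ℝ]) * g.1),
   ⟨(g.2.2.1 : ℝ) * (h.2.2.1 : ℝ), mul_pos g.2.2.1.2 h.2.2.1.2⟩,
   sp1Mul g.2.2.2.1 h.2.2.2.1, sp1Mul g.2.2.2.2 h.2.2.2.2⟩

/-- The identity of `𝐏`. -/
def Pone : P := ⟨0, 0, ⟨1, one_pos⟩, sp1One, sp1One⟩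

/-- The action of `𝐏` on `𝒬`. -/
def Pact (g : P) (p : QH) : QH :=
  ⟨g.1 + Real.sqrt (g.2.2.1 : ℝ) • ((g.2.2.2.1 : ℍ[ℝ]) * p.1 * star (g.2.2.2.2 : ℍ[ℝ])),
   g.2.1 + (g.2.2.1 : ℝ) • sandwich (g.2.2.2.2 : ℍ[ℝ]) p.2
     - (2 * Real.sqrt (g.2.2.1 : ℝ)) •
        imPart ((g.2.2.2.2 : ℍ[ℝ]) * star p.1 * star (g.2.2.2.1 : ℍ[ℝ]) * g.1)⟩

/-- The unitary representation `U` of `𝐏` on `L²(𝒬)`. -/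
def Uop (g : P) (f : QH → ℂ) : QH → ℂ := fun z =>
  (((g.2.2.1 : ℝ) ^ (-(5 : ℝ)/2) : ℝ) : ℂ) *
    f ((Real.sqrt (g.2.2.1 : ℝ))⁻¹ •
          (star (g.2.2.2.1 : ℍ[ℝ]) * (z.1 - g.1) * (g.2.2.2.2 : ℍ[ℝ])),
       ((g.2.2.1 : ℝ))⁻¹ •
          sandwich (star (g.2.2.2.2 : ℍ[ℝ]))
            (z.2 - g.2.1 + (2 : ℝ) • imPart (star z.1 * g.1)))

/-- The continuous wavelet transform `W_φ f (g) = ⟨f, U(g)φ⟩_{L²(𝒬)}`. -/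
def Wav (φ f : QH → ℂ) (g : P) : ℂ :=
  ∫ z : QH, f z * (starRingEnd ℂ) (Uop g φ z)

/-- Group convolution on `𝒬`. -/
def Qconv (f g : QH → ℂ) : QH → ℂ := fun z =>
  ∫ w : QH, f w * g (Qmul (Qinv w) z)

/-- dilation `φ_ρ(x,t) = ρ^{−5} φ(x/√ρ, t/ρ)`. -/
def dilateF (ρ : ℝ) (φ : QH → ℂ) : QH → ℂ := fun z =>
  ((ρ ^ (-5 : ℤ) : ℝ) : ℂ) * φ ((Real.sqrt ρ)⁻¹ • z.1, ρ⁻¹ • z.2)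

/-- rotation `φ_{u,v}(x,t) = φ(ū x v, v̄ t v)`. -/
def rotF (u v : Sp1) (φ : QH → ℂ) : QH → ℂ := fun z =>
  φ (star (u : ℍ[ℝ]) * z.1 * (v : ℍ[ℝ]), sandwich (star (v : ℍ[ℝ])) z.2)

/-- `φ̃(x,t) = conj (φ(−x,−t))`. -/
def tildeF (φ : QH → ℂ) : QH → ℂ := fun z => (starRingEnd ℂ) (φ (-z.1, -z.2))

/-- The Radon transform `ℛf(x,t) = ∫_ℍ f(y, t − 2 Im(ȳ x)) dy`. -/
def Radon (f : QH → ℂ) : QH → ℂ := fun z =>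
  ∫ y : ℍ[ℝ], f (y, z.2 - (2 : ℝ) • imPart (star y * z.1))

/-- Partial Fourier transform in the central variable. -/
def F2 (f : QH → ℂ) : QH → ℂ := fun p =>
  ∫ t : ↥ImH, f (p.1, t) * Complex.exp (Complex.I * ((⟪t, p.2⟫ : ℝ) : ℂ))

/-- Full (Euclidean) Fourier transform on `𝒬 ≅ ℝ⁴ × ℝ³`. -/
def FF (f : QH → ℂ) : QH → ℂ := fun p =>
  ∫ z : QH, f z * Complex.exp (Complex.I * ((⟪z.1, p.1⟫ : ℝ) : ℂ)) *
    Complex.exp (Complex.I * ((⟪z.2, p.2⟫ : ℝ) : ℂ))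

/-- Inverse of the partial Fourier transform `ℱ₂`. -/
def F2inv (f : QH → ℂ) : QH → ℂ := fun z =>
  (((2 * Real.pi) ^ (-3 : ℤ) : ℝ) : ℂ) *
    ∫ a : ↥ImH, f (z.1, a) * Complex.exp (-Complex.I * ((⟪z.2, a⟫ : ℝ) : ℂ))

/-- Inverse of the full Fourier transform `ℱ`. -/
def FFinv (f : QH → ℂ) : QH → ℂ := fun z =>
  (((2 * Real.pi) ^ (-7 : ℤ) : ℝ) : ℂ) *
    ∫ p : QH, f p * Complex.exp (-Complex.I * ((⟪z.1, p.1⟫ : ℝ) : ℂ)) *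
      Complex.exp (-Complex.I * ((⟪z.2, p.2⟫ : ℝ) : ℂ))

/-- The mixing map `Ψ(f)(x,t) = f(−2 x t, t)`. -/
def Psi (f : QH → ℂ) : QH → ℂ := fun z =>
  f ((-2 : ℝ) • (z.1 * (z.2 : ℍ[ℝ])), z.2)

open Classical in
/-- The inverse mixing map. -/
def PsiInv (f : QH → ℂ) : QH → ℂ := fun z =>
  if z.2 = 0 then 0 else
    f ((2 * ‖(z.2 : ℍ[ℝ])‖ ^ 2)⁻¹ • (z.1 * (z.2 : ℍ[ℝ])), z.2)

/-- A function is a Schwartz function. -/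
def IsSchwartz (f : QH → ℂ) : Prop := ∃ g : SchwartzMap QH ℂ, ⇑g = f

/-- The Semyanistyi–Lizorkin space `𝒮^*(𝒬)`: Schwartz functions all of whose
derivatives in the central variable vanish at `t = 0`. -/
def SstarUpper : Set (QH → ℂ) :=
  {f | IsSchwartz f ∧
    ∀ (x : ℍ[ℝ]) (n : ℕ), iteratedFDeriv ℝ n (fun t : ↥ImH => f (x, t)) 0 = 0}

/-- The Semyanistyi–Lizorkin space `𝒮_*(𝒬)`: Schwartz functions all of whose
moments in the central variable vanish. -/
def SstarLower : Set (QH → ℂ) :=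
  {f | IsSchwartz f ∧
    ∀ (x : ℍ[ℝ]) (s : ℕ × ℕ × ℕ),
      ∫ t : ↥ImH, f (x, t) *
        ((((t : ℍ[ℝ]).imI ^ s.1 * (t : ℍ[ℝ]).imJ ^ s.2.1 * (t : ℍ[ℝ]).imK ^ s.2.2 : ℝ)) : ℂ) = 0}

/-- basis vectors of `Im ℍ` -/
def eI : ↥ImH := ⟨⟨0,1,0,0⟩, rfl⟩
def eJ : ↥ImH := ⟨⟨0,0,1,0⟩, rfl⟩
def eK : ↥ImH := ⟨⟨0,0,0,1⟩, rfl⟩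

/-- partial derivative in the central variable along `v ∈ Im ℍ`. -/
def Dt (v : ↥ImH) (f : QH → ℂ) : QH → ℂ := fun z => fderiv ℝ f z (0, v)

/-- `𝓛 = −(1/π²)(∂²/∂t₁² + ∂²/∂t₂² + ∂²/∂t₃²)` acting in the central variable. -/
def Lop (f : QH → ℂ) : QH → ℂ := fun z =>
  -(((Real.pi ^ 2)⁻¹ : ℝ) : ℂ) * (Dt eI (Dt eI f) z + Dt eJ (Dt eJ f) z + Dt eK (Dt eK f) z)

/-! Along the ray `s ↦ (x, s • t)` all derivatives of `f` vanish at `s = 0`, so Taylor's formula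
bounds `‖f (x, t)‖` by `‖t‖ ^ (2p) / (2p)!` times the largest `(2p)`-th derivative of `f` on the
segment from `(x, 0)` to `(x, t)`; Schwartz decay of that derivative in `x` gives the factor
`((1 + ‖x‖ ^ 2) ^ q)⁻¹`. -/

section TaylorBounds

open Set
open scoped Nat

variable {E F G : Type*} [NormedAddCommGroup E] [NormedSpace ℝ E]
  [NormedAddCommGroup F] [NormedSpace ℝ F] [NormedAddCommGroup G] [NormedSpace ℝ G]

theorem norm_le_of_iteratedDeriv_eq_zero {n : ℕ} {γ : ℝ → F} (hγ : ContDiff ℝ n γ)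
    (h0 : ∀ k < n, iteratedDeriv k γ 0 = 0) {M s : ℝ} (hs : 0 ≤ s)
    (hM : ∀ u ∈ Icc 0 s, ‖iteratedDeriv n γ u‖ ≤ M) :
    ‖γ s‖ ≤ M * s ^ n / n ! := by
  induction n generalizing γ s with
  | zero => simpa using hM s ⟨hs, le_rfl⟩
  | succ n ih =>
    rw [Nat.cast_succ] at hγ
    obtain ⟨hγd, -, hγ'⟩ := contDiff_succ_iff_deriv.mp hγ
    have hderiv : ∀ u ∈ Icc 0 s, ‖deriv γ u‖ ≤ M * u ^ n / n ! := fun u hu =>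
      ih hγ' (fun k hk => by simpa [iteratedDeriv_succ'] using h0 (k + 1) (by omega)) hu.1
        fun w hw => by simpa [iteratedDeriv_succ'] using hM w ⟨hw.1, hw.2.trans hu.2⟩
    have hB : ∀ u, HasDerivAt (fun u => M * u ^ (n + 1) / (n + 1)!) (M * u ^ n / n !) u := by
      intro u
      refine (((hasDerivAt_pow (n + 1) u).const_mul M).div_const _).congr_deriv ?_
      rw [Nat.factorial_succ]
      push_cast
      field_simp
    refine image_norm_le_of_norm_deriv_right_le_deriv_boundary hγd.continuous.continuousOn
      (fun u _ => (hγd u).hasDerivAt.hasDerivWithinAt) ?_ hB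
      (fun u hu => hderiv u (Ico_subset_Icc_self hu)) ⟨hs, le_rfl⟩
    simpa using h0 0 n.succ_pos

theorem iteratedDeriv_comp_smul_const {n : ℕ∞} {h : E → F} (hh : ContDiff ℝ n h) (v : E)
    {k : ℕ} (hk : k ≤ n) (s : ℝ) :
    iteratedDeriv k (fun s : ℝ => h (s • v)) s = iteratedFDeriv ℝ k h (s • v) fun _ => v := by
  have : (fun s : ℝ => h (s • v)) = h ∘ ContinuousLinearMap.toSpanSingleton ℝ v := rfl
  rw [iteratedDeriv_eq_iteratedFDeriv, this,
    ContinuousLinearMap.iteratedFDeriv_comp_right _ hh _ (by exact_mod_cast hk)]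
  simp

theorem norm_le_of_iteratedFDeriv_eq_zero {n : ℕ} {h : E → F} (hh : ContDiff ℝ n h)
    (h0 : ∀ k < n, iteratedFDeriv ℝ k h 0 = 0) {v : E} {M : ℝ}
    (hM : ∀ s ∈ Icc (0 : ℝ) 1, ‖iteratedFDeriv ℝ n h (s • v)‖ ≤ M) :
    ‖h v‖ ≤ M * ‖v‖ ^ n / n ! := by
  have hray : ContDiff ℝ n fun s : ℝ => h (s • v) := hh.comp (contDiff_id.smul contDiff_const)
  have := norm_le_of_iteratedDeriv_eq_zero hray (M := M * ‖v‖ ^ n) ?_ zero_le_one ?_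
  · simpa using this
  · intro k hk
    rw [iteratedDeriv_comp_smul_const hh v (by exact_mod_cast hk.le), zero_smul, h0 k hk]
    rfl
  · intro s hs
    rw [iteratedDeriv_comp_smul_const hh v le_rfl]
    calc _ ≤ ‖iteratedFDeriv ℝ n h (s • v)‖ * ∏ _ : Fin n, ‖v‖ :=
          ContinuousMultilinearMap.le_opNorm _ _
      _ ≤ M * ‖v‖ ^ n := by
        rw [Finset.prod_const, Finset.card_univ, Fintype.card_fin]
        exact mul_le_mul_of_nonneg_right (hM s hs) (by positivity)

theorem norm_iteratedFDeriv_comp_prodMk_right_le {n : ℕ∞} {f : E × F → G} (hf : ContDiff ℝ n f)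
    (x : E) (y : F) {k : ℕ} (hk : k ≤ n) :
    ‖iteratedFDeriv ℝ k (fun y => f (x, y)) y‖ ≤ ‖iteratedFDeriv ℝ k f (x, y)‖ := by
  have : (fun y => f (x, y)) = (fun z => f ((x, 0) + z)) ∘ ContinuousLinearMap.inr ℝ E F := by
    ext y; simp
  have hshift : ContDiff ℝ n fun z => f ((x, 0) + z) := hf.comp (contDiff_const.add contDiff_id)
  rw [this, ContinuousLinearMap.iteratedFDeriv_comp_right _ hshift _ (by exact_mod_cast hk),
    iteratedFDeriv_comp_add_left]
  refine (ContinuousMultilinearMap.norm_compContinuousLinearMap_le _ _).trans ?_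
  simp only [ContinuousLinearMap.inr_apply, Prod.mk_add_mk, add_zero, zero_add]
  refine mul_le_of_le_one_right (norm_nonneg _) (Finset.prod_le_one (fun _ _ => norm_nonneg _) ?_)
  intro _ _
  exact ContinuousLinearMap.norm_inr_le_one ℝ E F

theorem SchwartzMap.exists_one_add_norm_sq_pow_mul_le (g : SchwartzMap E F) (k n : ℕ) :
    ∃ C, ∀ x, (1 + ‖x‖ ^ 2) ^ k * ‖iteratedFDeriv ℝ n g x‖ ≤ C := by
  refine ⟨_, fun x => le_trans ?_
    (g.one_add_le_sup_seminorm_apply (𝕜 := ℝ) (m := (2 * k, n)) le_rfl le_rfl x)⟩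
  gcongr
  rw [pow_mul]
  gcongr
  nlinarith [norm_nonneg x]

end TaylorBounds

/-- For `f ∈ 𝒮^*(𝒬)` and `p, q ∈ ℕ` there is a constant `c_{p,q}` with
`|f(x,t)| ≤ c_{p,q} |t|^{2p} (1+|x|²)^{−q}`. -/
theorem statement7 (f : QH → ℂ) (hf : f ∈ SstarUpper) (p q : ℕ) :
    ∃ c : ℝ, ∀ (x : ℍ[ℝ]) (t : ↥ImH),
      ‖f (x, t)‖ ≤ c * ‖t‖ ^ (2 * p) * ((1 + ‖x‖ ^ 2) ^ q)⁻¹ := by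
  obtain ⟨g, rfl⟩ := hf.1
  obtain ⟨C, hC⟩ := g.exists_one_add_norm_sq_pow_mul_le q (2 * p)
  refine ⟨C / (2 * p).factorial, fun x t => ?_⟩
  have hdecay : ∀ u : ↥ImH,
      ‖iteratedFDeriv ℝ (2 * p) (fun u => g (x, u)) u‖ ≤ C * ((1 + ‖x‖ ^ 2) ^ q)⁻¹ := by
    intro u
    rw [← div_eq_mul_inv, le_div_iff₀' (by positivity)]
    calc (1 + ‖x‖ ^ 2) ^ q * ‖iteratedFDeriv ℝ (2 * p) (fun u => g (x, u)) u‖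
        ≤ (1 + ‖(x, u)‖ ^ 2) ^ q * ‖iteratedFDeriv ℝ (2 * p) g (x, u)‖ := by
          gcongr
          · exact norm_fst_le (x, u)
          · exact norm_iteratedFDeriv_comp_prodMk_right_le (g.smooth ⊤) x u le_top
      _ ≤ C := hC (x, u)
  have hslice : ContDiff ℝ (2 * p : ℕ) fun u => g (x, u) :=
    (g.smooth (2 * p : ℕ)).comp (contDiff_prodMk_right x)
  calc ‖g (x, t)‖ ≤ C * ((1 + ‖x‖ ^ 2) ^ q)⁻¹ * ‖t‖ ^ (2 * p) / (2 * p).factorial :=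
        norm_le_of_iteratedFDeriv_eq_zero hslice (fun k _ => hf.2 x k) fun s _ => hdecay _
    _ = C / (2 * p).factorial * ‖t‖ ^ (2 * p) * ((1 + ‖x‖ ^ 2) ^ q)⁻¹ := by ring

end
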